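/- Let (u, θ, q) be a smooth solution of the thermoviscoelastic system with second sound satisfying boundary conditions (D). Then for every natural number k and all t > 0, the k-th order energy satisfies dE⁽ᵏ⁾/dt (t) = −2 ∫₀ᴸ δ(x) (∂ₜᵏ u_xt)(x,t)² dx − β ∫₀ᴸ (∂ₜᵏ q)(x,t)² dx. -/

import Mathlib

open MeasureTheory Set intervalIntegral Filter Topology
noncomputable section
def pdt (f : ℝ → ℝ → ℝ) : ℝ → ℝ → ℝ := fun x t => deriv (f x) t
def pdx (f : ℝ → ℝ → ℝ) : ℝ → ℝ → ℝ := fun x t => deriv (fun y => f y t) x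

def IsSmoothSol (L η β κ τ : ℝ) (m δ p : ℝ → ℝ) (u θ q : ℝ → ℝ → ℝ) : Prop :=
  ContDiff ℝ (⊤ : ℕ∞) (Function.uncurry u) ∧ ContDiff ℝ (⊤ : ℕ∞) (Function.uncurry θ) ∧
    ContDiff ℝ (⊤ : ℕ∞) (Function.uncurry q) ∧
    ∀ x ∈ Ioo (0 : ℝ) L, ∀ t : ℝ, 0 < t →
      (m x * pdt (pdt u) x t
          - pdx (fun y s => p y * pdx u y s + 2 * δ y * pdt (pdx u) y s) x t
          + η * pdx θ x t = 0) ∧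
      (pdt θ x t + κ * pdx q x t + η * pdt (pdx u) x t = 0) ∧
      (τ * pdt q x t + β * q x t + κ * pdx θ x t = 0)

/-- Boundary conditions (D): clamped structure, temperature zero at both ends. -/
def BCD (L : ℝ) (u θ : ℝ → ℝ → ℝ) : Prop :=
  ∀ t : ℝ, 0 ≤ t → u 0 t = 0 ∧ u L t = 0 ∧ θ 0 t = 0 ∧ θ L t = 0

/-- `k`-th time derivative of a function of `(x, t)`. -/
def pdtn (k : ℕ) (f : ℝ → ℝ → ℝ) : ℝ → ℝ → ℝ := fun x t => iteratedDeriv k (f x) t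

/-- The `k`-th order energy `E⁽ᵏ⁾`; `E⁽⁰⁾ = E₁`, `E⁽¹⁾ = E₂`. -/
def energyN (k : ℕ) (L τ : ℝ) (m p : ℝ → ℝ) (u θ q : ℝ → ℝ → ℝ) (t : ℝ) : ℝ :=
  (1 / 2) * ((∫ x in (0 : ℝ)..L, p x * (pdtn k (pdx u) x t) ^ 2)
    + (∫ x in (0 : ℝ)..L, m x * (pdtn k (pdt u) x t) ^ 2)
    + (∫ x in (0 : ℝ)..L, (pdtn k θ x t) ^ 2)
    + τ * ∫ x in (0 : ℝ)..L, (pdtn k q x t) ^ 2)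



lemma contDiff_slice_t {f : ℝ → ℝ → ℝ} (hf : ContDiff ℝ (⊤ : ℕ∞) ↿f) (x : ℝ) : ContDiff ℝ (⊤ : ℕ∞) (f x) :=
  hf.comp (contDiff_const.prodMk contDiff_id)

lemma contDiff_slice_x {f : ℝ → ℝ → ℝ} (hf : ContDiff ℝ (⊤ : ℕ∞) ↿f) (t : ℝ) :
    ContDiff ℝ (⊤ : ℕ∞) (fun y => f y t) := hf.comp (contDiff_id.prodMk contDiff_const)

lemma hasDerivAt_pdt {f : ℝ → ℝ → ℝ} (hf : ContDiff ℝ (⊤ : ℕ∞) ↿f) (x t : ℝ) :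
    HasDerivAt (f x) (pdt f x t) t :=
  ((contDiff_slice_t hf x).differentiable (by simp) t).hasDerivAt

lemma hasDerivAt_pdx {f : ℝ → ℝ → ℝ} (hf : ContDiff ℝ (⊤ : ℕ∞) ↿f) (x t : ℝ) :
    HasDerivAt (fun y => f y t) (pdx f x t) x :=
  ((contDiff_slice_x hf t).differentiable (by simp) x).hasDerivAt

lemma pdt_eq_fderiv {f : ℝ → ℝ → ℝ} (hf : ContDiff ℝ (⊤ : ℕ∞) ↿f) (x t : ℝ) :
    pdt f x t = fderiv ℝ ↿f (x, t) (0, 1) := by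
  have hc : HasDerivAt (fun s : ℝ => (x, s)) ((0:ℝ), (1:ℝ)) t :=
    (hasDerivAt_const t x).prodMk (hasDerivAt_id t)
  have h1 : HasDerivAt (f x) (fderiv ℝ ↿f (x, t) (0, 1)) t :=
    (hf.differentiable (by simp) (x, t)).hasFDerivAt.comp_hasDerivAt t hc
  show deriv (f x) t = _
  exact h1.deriv

lemma pdx_eq_fderiv {f : ℝ → ℝ → ℝ} (hf : ContDiff ℝ (⊤ : ℕ∞) ↿f) (x t : ℝ) :
    pdx f x t = fderiv ℝ ↿f (x, t) (1, 0) := by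
  have hc : HasDerivAt (fun y : ℝ => (y, t)) ((1:ℝ), (0:ℝ)) x :=
    (hasDerivAt_id x).prodMk (hasDerivAt_const x t)
  have h1 : HasDerivAt (fun y => f y t) (fderiv ℝ ↿f (x, t) (1, 0)) x :=
    by have := (hf.differentiable (by simp) (x, t)).hasFDerivAt.comp_hasDerivAt x hc; exact this
  show deriv (fun y => f y t) x = _
  exact h1.deriv

lemma contDiff_pdt {f : ℝ → ℝ → ℝ} (hf : ContDiff ℝ (⊤ : ℕ∞) ↿f) : ContDiff ℝ (⊤ : ℕ∞) ↿(pdt f) := by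
  have : ↿(pdt f) = fun p : ℝ × ℝ => fderiv ℝ ↿f p (0, 1) := by
    funext p
    exact pdt_eq_fderiv hf p.1 p.2
  rw [this]
  exact (hf.fderiv_right (by simp)).clm_apply contDiff_const

lemma contDiff_pdx {f : ℝ → ℝ → ℝ} (hf : ContDiff ℝ (⊤ : ℕ∞) ↿f) : ContDiff ℝ (⊤ : ℕ∞) ↿(pdx f) := by
  have : ↿(pdx f) = fun p : ℝ × ℝ => fderiv ℝ ↿f p (1, 0) := by
    funext p
    exact pdx_eq_fderiv hf p.1 p.2
  rw [this]
  exact (hf.fderiv_right (by simp)).clm_apply contDiff_const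
lemma pdx_pdt_comm {f : ℝ → ℝ → ℝ} (hf : ContDiff ℝ (⊤ : ℕ∞) ↿f) : pdx (pdt f) = pdt (pdx f) := by
  funext x t
  set F2 := fderiv ℝ ↿f with hF2
  have hdf : ∀ y, HasFDerivAt ↿f (F2 y) y := fun y => (hf.differentiable (by simp) y).hasFDerivAt
  have hf2 : ContDiff ℝ (⊤ : ℕ∞) F2 := hf.fderiv_right (by simp)
  have hx : HasFDerivAt F2 (fderiv ℝ F2 (x, t)) (x, t) :=
    (hf2.differentiable (by simp) (x, t)).hasFDerivAt
  have symm := second_derivative_symmetric hdf hx (0, 1) (1, 0)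
  -- left side
  have h1 : HasDerivAt (fun y : ℝ => F2 (y, t)) (fderiv ℝ F2 (x, t) (1, 0)) x := by
    have hc : HasDerivAt (fun y : ℝ => (y, t)) ((1:ℝ), (0:ℝ)) x :=
      (hasDerivAt_id x).prodMk (hasDerivAt_const x t)
    exact hx.comp_hasDerivAt x hc
  have h1' : HasDerivAt (fun y : ℝ => F2 (y, t) (0, 1)) (fderiv ℝ F2 (x, t) (1, 0) (0, 1)) x := by
    have := h1.clm_apply (hasDerivAt_const x ((0:ℝ), (1:ℝ)))
    simpa using this
  have h2 : HasDerivAt (fun s : ℝ => F2 (x, s)) (fderiv ℝ F2 (x, t) (0, 1)) t := by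
    have hc : HasDerivAt (fun s : ℝ => (x, s)) ((0:ℝ), (1:ℝ)) t :=
      (hasDerivAt_const t x).prodMk (hasDerivAt_id t)
    exact hx.comp_hasDerivAt t hc
  have h2' : HasDerivAt (fun s : ℝ => F2 (x, s) (1, 0)) (fderiv ℝ F2 (x, t) (0, 1) (1, 0)) t := by
    have := h2.clm_apply (hasDerivAt_const t ((1:ℝ), (0:ℝ)))
    simpa using this
  have e1 : pdx (pdt f) x t = fderiv ℝ F2 (x, t) (1, 0) (0, 1) := by
    show deriv (fun y => pdt f y t) x = _
    have : (fun y => pdt f y t) = fun y : ℝ => F2 (y, t) (0, 1) := by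
      funext y; exact pdt_eq_fderiv hf y t
    rw [this]
    exact h1'.deriv
  have e2 : pdt (pdx f) x t = fderiv ℝ F2 (x, t) (0, 1) (1, 0) := by
    show deriv (fun s => pdx f x s) t = _
    have : (fun s => pdx f x s) = fun s : ℝ => F2 (x, s) (1, 0) := by
      funext s; exact pdx_eq_fderiv hf x s
    rw [this]
    exact h2'.deriv
  rw [e1, e2, ← symm]

lemma pdtn_zero (f : ℝ → ℝ → ℝ) : pdtn 0 f = f := by
  funext x t; simp [pdtn]

lemma pdtn_succ' (k : ℕ) (f : ℝ → ℝ → ℝ) : pdtn (k + 1) f = pdtn k (pdt f) := by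
  funext x t
  show iteratedDeriv (k + 1) (f x) t = iteratedDeriv k (pdt f x) t
  rw [iteratedDeriv_succ']
  rfl

lemma pdtn_succ (k : ℕ) (f : ℝ → ℝ → ℝ) : pdtn (k + 1) f = pdt (pdtn k f) := by
  funext x t
  show iteratedDeriv (k + 1) (f x) t = deriv (pdtn k f x) t
  rw [iteratedDeriv_succ]
  rfl

lemma contDiff_pdtn {f : ℝ → ℝ → ℝ} (hf : ContDiff ℝ (⊤ : ℕ∞) ↿f) (k : ℕ) :
    ContDiff ℝ (⊤ : ℕ∞) ↿(pdtn k f) := by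
  induction k generalizing f with
  | zero => rw [pdtn_zero]; exact hf
  | succ k ih => rw [pdtn_succ']; exact ih (contDiff_pdt hf)

lemma pdx_pdtn {f : ℝ → ℝ → ℝ} (hf : ContDiff ℝ (⊤ : ℕ∞) ↿f) (k : ℕ) :
    pdx (pdtn k f) = pdtn k (pdx f) := by
  induction k generalizing f with
  | zero => rw [pdtn_zero, pdtn_zero]
  | succ k ih =>
    rw [pdtn_succ', pdtn_succ', ih (contDiff_pdt hf), pdx_pdt_comm hf]

lemma iteratedDeriv_comb {g h : ℝ → ℝ} (hg : ContDiff ℝ (⊤ : ℕ∞) g) (hh : ContDiff ℝ (⊤ : ℕ∞) h)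
    (c d : ℝ) (k : ℕ) :
    iteratedDeriv k (fun s => c * g s + d * h s) =
      fun t => c * iteratedDeriv k g t + d * iteratedDeriv k h t := by
  induction k with
  | zero => simp [iteratedDeriv_zero]
  | succ k ih =>
    rw [iteratedDeriv_succ, ih]
    funext t
    have dg : DifferentiableAt ℝ (iteratedDeriv k g) t :=
      (hg.differentiable_iteratedDeriv k (by exact_mod_cast ENat.coe_lt_top k)).differentiableAt
    have dh : DifferentiableAt ℝ (iteratedDeriv k h) t :=
      (hh.differentiable_iteratedDeriv k (by exact_mod_cast ENat.coe_lt_top k)).differentiableAt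
    rw [iteratedDeriv_succ, iteratedDeriv_succ]
    exact ((dg.hasDerivAt.const_mul c).add (dh.hasDerivAt.const_mul d)).deriv
lemma param_deriv {a b t₀ : ℝ} (hab : a ≤ b) {H H' : ℝ → ℝ → ℝ}
    (hH : ContinuousOn (fun p : ℝ × ℝ => H p.1 p.2) (Icc a b ×ˢ Icc (t₀ - 1) (t₀ + 1)))
    (hH' : ContinuousOn (fun p : ℝ × ℝ => H' p.1 p.2) (Icc a b ×ˢ Icc (t₀ - 1) (t₀ + 1)))
    (hd : ∀ x ∈ Icc a b, ∀ t ∈ Metric.ball t₀ 1, HasDerivAt (H x) (H' x t) t) :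
    HasDerivAt (fun t => ∫ x in a..b, H x t) (∫ x in a..b, H' x t₀) t₀ := by
  have hsub : uIoc a b ⊆ Icc a b := by
    rw [uIoc_of_le hab]; exact Ioc_subset_Icc_self
  have hball : Metric.ball t₀ 1 ⊆ Icc (t₀ - 1) (t₀ + 1) := by
    rw [Real.ball_eq_Ioo]; exact Ioo_subset_Icc_self
  have ht₀ : t₀ ∈ Icc (t₀ - 1) (t₀ + 1) := by constructor <;> linarith
  have sliceH : ∀ t ∈ Icc (t₀ - 1) (t₀ + 1), ContinuousOn (fun x => H x t) (Icc a b) := by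
    intro t ht
    have : (fun x => H x t) = (fun p : ℝ × ℝ => H p.1 p.2) ∘ (fun x => (x, t)) := rfl
    rw [this]
    exact hH.comp (Continuous.continuousOn (by fun_prop)) (fun y hy => mk_mem_prod hy ht)
  have sliceH' : ∀ t ∈ Icc (t₀ - 1) (t₀ + 1), ContinuousOn (fun x => H' x t) (Icc a b) := by
    intro t ht
    have : (fun x => H' x t) = (fun p : ℝ × ℝ => H' p.1 p.2) ∘ (fun x => (x, t)) := rfl
    rw [this]
    exact hH'.comp (Continuous.continuousOn (by fun_prop)) (fun y hy => mk_mem_prod hy ht)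
  obtain ⟨M, hM⟩ := IsCompact.exists_bound_of_continuousOn
    (isCompact_Icc.prod isCompact_Icc) hH'
  have key := intervalIntegral.hasDerivAt_integral_of_dominated_loc_of_deriv_le
    (F := fun t x => H x t) (F' := fun t x => H' x t) (x₀ := t₀) (a := a) (b := b)
    (bound := fun _ => M) (μ := volume) (s := Metric.ball t₀ 1) (Metric.ball_mem_nhds t₀ one_pos)
    ?_ ?_ ?_ ?_ ?_ ?_
  · exact key.2
  · filter_upwards [Metric.ball_mem_nhds t₀ one_pos] with t ht
    exact (((sliceH t (hball ht)).mono hsub).aestronglyMeasurable measurableSet_uIoc)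
  · exact (sliceH t₀ ht₀).intervalIntegrable_of_Icc hab
  · exact ((sliceH' t₀ ht₀).mono hsub).aestronglyMeasurable measurableSet_uIoc
  · refine Eventually.of_forall (fun x hx t ht => ?_)
    exact hM (x, t) (mk_mem_prod (hsub hx) (hball ht))
  · exact intervalIntegrable_const
  · refine Eventually.of_forall (fun x hx t ht => ?_)
    exact hd x (hsub hx) t ht
lemma avg_tendsto {g : ℝ → ℝ} (hg : Continuous g) (b : ℝ) :
    Tendsto (fun n : ℕ => ((n : ℝ) + 1) * ∫ x in b..(b + ((n : ℝ) + 1)⁻¹), g x)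
      atTop (𝓝 (g b)) := by
  have hF : HasDerivAt (fun y => ∫ x in b..y, g x) (g b) b :=
    intervalIntegral.integral_hasDerivAt_right (hg.intervalIntegrable b b)
      (hg.stronglyMeasurableAtFilter volume (𝓝 b)) hg.continuousAt
  have hslope := hasDerivAt_iff_tendsto_slope.1 hF
  have hinv : Tendsto (fun n : ℕ => ((n : ℝ) + 1)⁻¹) atTop (𝓝 0) := by
    apply tendsto_inv_atTop_zero.comp
    exact tendsto_atTop_add_const_right _ 1 tendsto_natCast_atTop_atTop
  have hseq : Tendsto (fun n : ℕ => b + ((n : ℝ) + 1)⁻¹) atTop (𝓝[≠] b) := by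
    apply tendsto_nhdsWithin_of_tendsto_nhds_of_eventually_within
    · simpa using (tendsto_const_nhds.add hinv)
    · refine Eventually.of_forall fun n => ?_
      have : ((n : ℝ) + 1)⁻¹ ≠ 0 := by positivity
      simp [this]
  have := hslope.comp hseq
  have heq : ∀ n : ℕ, slope (fun y => ∫ x in b..y, g x) b (b + ((n : ℝ) + 1)⁻¹)
      = ((n : ℝ) + 1) * ∫ x in b..(b + ((n : ℝ) + 1)⁻¹), g x := by
    intro n
    have hne : ((n : ℝ) + 1) ≠ 0 := by positivity
    rw [slope_def_field]
    field_simp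
    ring_nf
    simp
  have : Tendsto (fun n : ℕ => ((n : ℝ) + 1) * ∫ x in b..(b + ((n : ℝ) + 1)⁻¹), g x)
      atTop (𝓝 (g b)) := by
    refine this.congr fun n => ?_
    simp only [Function.comp]
    rw [heq n]
  exact this
lemma ftc_lipschitz {K : NNReal} {g ψ : ℝ → ℝ} {a b : ℝ} (hab : a ≤ b)
    (hg : LipschitzWith K g) (hψ : ContinuousOn ψ (Icc a b))
    (hae : ∀ᵐ x, x ∈ Ioo a b → HasDerivAt g (ψ x) x) :
    ∫ x in a..b, ψ x = g b - g a := by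
  have hgc : Continuous g := hg.continuous
  set h : ℕ → ℝ := fun n => ((n : ℝ) + 1)⁻¹ with hh
  have hpos : ∀ n, 0 < h n := fun n => by positivity
  set F : ℕ → ℝ → ℝ := fun n x => ((n : ℝ) + 1) * (g (x + h n) - g x) with hF
  -- integral of F n over Ioo a b
  have hgi : ∀ c d : ℝ, IntervalIntegrable g volume c d := fun c d => hgc.intervalIntegrable c d
  have key : ∀ n, ∫ x in Ioo a b, F n x =
      ((n : ℝ) + 1) * ((∫ x in b..(b + h n), g x) - ∫ x in a..(a + h n), g x) := by
    intro n
    rw [← MeasureTheory.integral_Ioc_eq_integral_Ioo,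
      ← intervalIntegral.integral_of_le hab]
    have e1 : ∫ x in a..b, F n x
        = ((n : ℝ) + 1) * ((∫ x in a..b, g (x + h n)) - ∫ x in a..b, g x) := by
      have h1 : IntervalIntegrable (fun x => g (x + h n)) volume a b :=
        (hgc.comp (continuous_id.add continuous_const)).intervalIntegrable a b
      rw [← intervalIntegral.integral_sub h1 (hgi a b), ← intervalIntegral.integral_const_mul]
    rw [e1, intervalIntegral.integral_comp_add_right]
    congr 1
    have h2 : (∫ x in a..(a + h n), g x) + (∫ x in (a + h n)..(b + h n), g x)
        = ∫ x in a..(b + h n), g x := intervalIntegral.integral_add_adjacent_intervals (hgi _ _) (hgi _ _)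
    have h3 : (∫ x in a..b, g x) + (∫ x in b..(b + h n), g x)
        = ∫ x in a..(b + h n), g x := intervalIntegral.integral_add_adjacent_intervals (hgi _ _) (hgi _ _)
    linarith
  -- RHS tendsto
  have hR : Tendsto (fun n => ∫ x in Ioo a b, F n x) atTop (𝓝 (g b - g a)) := by
    simp only [key]
    have := (avg_tendsto hgc b).sub (avg_tendsto hgc a)
    refine this.congr fun n => ?_
    ring
  -- dominated convergence
  have hL : Tendsto (fun n => ∫ x in Ioo a b, F n x) atTop (𝓝 (∫ x in Ioo a b, ψ x)) := by
    refine MeasureTheory.tendsto_integral_of_dominated_convergence (fun _ => (K : ℝ)) ?_ ?_ ?_ ?_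
    · intro n
      exact (continuous_const.mul ((hgc.comp (continuous_id.add continuous_const)).sub hgc)).aestronglyMeasurable.restrict
    · exact integrable_const _
    · intro n
      refine (ae_restrict_iff' measurableSet_Ioo).2 (Eventually.of_forall fun x hx => ?_)
      have hd : dist (g (x + h n)) (g x) ≤ K * dist (x + h n) x := hg.dist_le_mul _ _
      rw [Real.dist_eq, Real.dist_eq] at hd
      have : |x + h n - x| = h n := by rw [show x + h n - x = h n by ring, abs_of_pos (hpos n)]
      rw [this] at hd
      have hne : ((n : ℝ) + 1) ≠ 0 := by positivity
      rw [Real.norm_eq_abs, hF]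
      have : |((n : ℝ) + 1) * (g (x + h n) - g x)| = ((n : ℝ) + 1) * |g (x + h n) - g x| := by
        rw [abs_mul, abs_of_pos (by positivity)]
      rw [this]
      calc ((n : ℝ) + 1) * |g (x + h n) - g x| ≤ ((n : ℝ) + 1) * ((K : ℝ) * h n) := by
            exact mul_le_mul_of_nonneg_left hd (by positivity)
        _ = (K : ℝ) := by rw [hh]; field_simp
    · -- ae convergence
      refine (ae_restrict_iff' measurableSet_Ioo).2 ?_
      filter_upwards [hae] with x hx hmem
      have hdx := hx hmem
      have hslope := hasDerivAt_iff_tendsto_slope.1 hdx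
      have hinv : Tendsto (fun n : ℕ => h n) atTop (𝓝 0) := by
        apply tendsto_inv_atTop_zero.comp
        exact tendsto_atTop_add_const_right _ 1 tendsto_natCast_atTop_atTop
      have hseq : Tendsto (fun n : ℕ => x + h n) atTop (𝓝[≠] x) := by
        apply tendsto_nhdsWithin_of_tendsto_nhds_of_eventually_within
        · simpa using (tendsto_const_nhds.add hinv)
        · exact Eventually.of_forall fun n => by simp [(hpos n).ne']
      have := hslope.comp hseq
      refine this.congr fun n => ?_
      simp only [Function.comp]
      rw [slope_def_field, show x + h n - x = h n by ring, div_eq_inv_mul]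
      have hi : (h n)⁻¹ = (n : ℝ) + 1 := by rw [hh]; simp
      rw [hi]
  have := tendsto_nhds_unique hL hR
  rw [intervalIntegral.integral_of_le hab, MeasureTheory.integral_Ioc_eq_integral_Ioo]
  exact this
lemma exists_lip_of_contDiff {f : ℝ → ℝ} (hf : ContDiff ℝ (⊤ : ℕ∞) f) (a b : ℝ) :
    ∃ K : NNReal, LipschitzOnWith K f (Icc a b) := by
  have hd : Continuous (deriv f) := hf.continuous_deriv (by simp)
  obtain ⟨M, hM⟩ := (isCompact_Icc (a := a) (b := b)).exists_bound_of_continuousOn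
    hd.continuousOn
  refine ⟨Real.toNNReal M, (convex_Icc a b).lipschitzOnWith_of_nnnorm_deriv_le
    (fun x _ => (hf.differentiable (by simp)).differentiableAt) (fun x hx => ?_)⟩
  rw [← NNReal.coe_le_coe, coe_nnnorm, Real.coe_toNNReal']
  exact le_trans (hM x hx) (le_max_left _ _)

lemma exists_lip_mul {f g : ℝ → ℝ} {a b : ℝ}
    (hf : ∃ K : NNReal, LipschitzOnWith K f (Icc a b))
    (hg : ∃ K : NNReal, LipschitzOnWith K g (Icc a b)) :
    ∃ K : NNReal, LipschitzOnWith K (fun x => f x * g x) (Icc a b) := by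
  obtain ⟨Kf, hKf⟩ := hf
  obtain ⟨Kg, hKg⟩ := hg
  obtain ⟨Mf, hMf⟩ := (isCompact_Icc (a := a) (b := b)).exists_bound_of_continuousOn
    hKf.continuousOn
  obtain ⟨Mg, hMg⟩ := (isCompact_Icc (a := a) (b := b)).exists_bound_of_continuousOn
    hKg.continuousOn
  refine ⟨Real.toNNReal (Mf * Kg + Mg * Kf), LipschitzOnWith.of_dist_le_mul fun x hx y hy => ?_⟩
  have h1 : dist (f x * g x) (f y * g y) ≤ |f x| * dist (g x) (g y) + |g y| * dist (f x) (f y) := by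
    rw [Real.dist_eq, Real.dist_eq, Real.dist_eq]
    calc |f x * g x - f y * g y| = |f x * (g x - g y) + g y * (f x - f y)| := by ring_nf
      _ ≤ |f x * (g x - g y)| + |g y * (f x - f y)| := abs_add_le _ _
      _ = |f x| * |g x - g y| + |g y| * |f x - f y| := by rw [abs_mul, abs_mul]
  have h2 : |f x| ≤ Mf := le_trans (le_of_eq (Real.norm_eq_abs _).symm) (hMf x hx)
  have h3 : |g y| ≤ Mg := le_trans (le_of_eq (Real.norm_eq_abs _).symm) (hMg y hy)
  have h4 : dist (g x) (g y) ≤ Kg * dist x y := hKg.dist_le_mul x hx y hy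
  have h5 : dist (f x) (f y) ≤ Kf * dist x y := hKf.dist_le_mul x hx y hy
  have hMf0 : 0 ≤ Mf := le_trans (abs_nonneg _) h2
  have hMg0 : 0 ≤ Mg := le_trans (abs_nonneg _) h3
  calc dist (f x * g x) (f y * g y)
      ≤ |f x| * (Kg * dist x y) + |g y| * (Kf * dist x y) := by
        refine le_trans h1 (add_le_add ?_ ?_)
        · exact mul_le_mul_of_nonneg_left h4 (abs_nonneg _)
        · exact mul_le_mul_of_nonneg_left h5 (abs_nonneg _)
    _ ≤ Mf * (Kg * dist x y) + Mg * (Kf * dist x y) := by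
        refine add_le_add ?_ ?_
        · exact mul_le_mul_of_nonneg_right h2 (by positivity)
        · exact mul_le_mul_of_nonneg_right h3 (by positivity)
    _ = (Mf * Kg + Mg * Kf) * dist x y := by ring
    _ ≤ Real.toNNReal (Mf * Kg + Mg * Kf) * dist x y := by
        refine mul_le_mul_of_nonneg_right ?_ dist_nonneg
        rw [Real.coe_toNNReal']
        exact le_max_left _ _
lemma exists_lip_add {f g : ℝ → ℝ} {a b : ℝ}
    (hf : ∃ K : NNReal, LipschitzOnWith K f (Icc a b))
    (hg : ∃ K : NNReal, LipschitzOnWith K g (Icc a b)) :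
    ∃ K : NNReal, LipschitzOnWith K (fun x => f x + g x) (Icc a b) := by
  obtain ⟨Kf, hKf⟩ := hf
  obtain ⟨Kg, hKg⟩ := hg
  refine ⟨Kf + Kg, LipschitzOnWith.of_dist_le_mul fun x hx y hy => ?_⟩
  have h1 := hKf.dist_le_mul x hx y hy
  have h2 := hKg.dist_le_mul x hx y hy
  rw [Real.dist_eq] at h1 h2 ⊢
  rw [NNReal.coe_add]
  calc |f x + g x - (f y + g y)| ≤ |f x - f y| + |g x - g y| := by
        rw [show f x + g x - (f y + g y) = (f x - f y) + (g x - g y) by ring]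
        exact abs_add_le _ _
    _ ≤ Kf * dist x y + Kg * dist x y := by rw [Real.dist_eq] at *; exact add_le_add h1 h2
    _ = (Kf + Kg) * dist x y := by rw [Real.dist_eq]; ring

lemma intervalIntegral_congr_Ioo {f g : ℝ → ℝ} {a b : ℝ} (hab : a ≤ b)
    (h : ∀ x ∈ Ioo a b, f x = g x) : ∫ x in a..b, f x = ∫ x in a..b, g x := by
  rw [intervalIntegral.integral_of_le hab, intervalIntegral.integral_of_le hab,
    MeasureTheory.integral_Ioc_eq_integral_Ioo, MeasureTheory.integral_Ioc_eq_integral_Ioo]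
  exact MeasureTheory.setIntegral_congr_fun measurableSet_Ioo h

lemma iteratedDeriv_zero_fun' (k : ℕ) : iteratedDeriv k (fun _ : ℝ => (0:ℝ)) = fun _ => 0 := by
  induction k with
  | zero => simp [iteratedDeriv_zero]
  | succ k ih => rw [iteratedDeriv_succ, ih]; funext t; simp

lemma iteratedDeriv_eventually_zero {g : ℝ → ℝ} {t : ℝ} (hg : ∀ᶠ s in 𝓝 t, g s = 0) (k : ℕ) :
    iteratedDeriv k g t = 0 := by
  have h : g =ᶠ[𝓝 t] (fun _ => (0:ℝ)) := hg
  rw [Filter.EventuallyEq.iteratedDeriv_eq k h, iteratedDeriv_zero_fun']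

lemma pdt_pdtn (k : ℕ) (g : ℝ → ℝ → ℝ) : pdt (pdtn k g) = pdtn k (pdt g) := by
  rw [← pdtn_succ, pdtn_succ']

lemma hasDerivAt_sq {f : ℝ → ℝ → ℝ} (hf : ContDiff ℝ (⊤ : ℕ∞) ↿f) (x t : ℝ) :
    HasDerivAt (fun s => f x s ^ 2) (2 * f x t * pdt f x t) t := by
  have := (hasDerivAt_pdt hf x t).pow 2
  norm_num at this
  exact this

lemma iteratedDeriv_comb4 {g₁ g₂ g₃ g₄ : ℝ → ℝ} (h₁ : ContDiff ℝ (⊤ : ℕ∞) g₁) (h₂ : ContDiff ℝ (⊤ : ℕ∞) g₂)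
    (h₃ : ContDiff ℝ (⊤ : ℕ∞) g₃) (h₄ : ContDiff ℝ (⊤ : ℕ∞) g₄) (c₁ c₂ c₃ c₄ : ℝ) (k : ℕ) :
    iteratedDeriv k (fun s => c₁ * g₁ s + c₂ * g₂ s + (c₃ * g₃ s + c₄ * g₄ s)) =
      fun t => c₁ * iteratedDeriv k g₁ t + c₂ * iteratedDeriv k g₂ t
        + (c₃ * iteratedDeriv k g₃ t + c₄ * iteratedDeriv k g₄ t) := by
  have h12 : ContDiff ℝ (⊤ : ℕ∞) (fun s => c₁ * g₁ s + c₂ * g₂ s) :=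
    ((h₁.const_smul c₁).add (h₂.const_smul c₂) : ContDiff ℝ (⊤ : ℕ∞) (fun s => c₁ • g₁ s + c₂ • g₂ s))
  have h34 : ContDiff ℝ (⊤ : ℕ∞) (fun s => c₃ * g₃ s + c₄ * g₄ s) :=
    ((h₃.const_smul c₃).add (h₄.const_smul c₄) : ContDiff ℝ (⊤ : ℕ∞) (fun s => c₃ • g₃ s + c₄ • g₄ s))
  have e := iteratedDeriv_comb h12 h34 1 1 k
  simp only [one_mul] at e
  rw [e]
  funext t
  rw [iteratedDeriv_comb h₁ h₂ c₁ c₂ k, iteratedDeriv_comb h₃ h₄ c₃ c₄ k]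
theorem higher_energy_dissipation
    (L η β κ τ : ℝ) (hL : 0 < L) (hη : 0 < η) (hβ : 0 < β) (hκ : 0 < κ) (hτ : 0 < τ)
    (m δ p : ℝ → ℝ)
    (hmLip : ∃ K, LipschitzOnWith K m (Icc 0 L))
    (hδLip : ∃ K, LipschitzOnWith K δ (Icc 0 L))
    (hpLip : ∃ K, LipschitzOnWith K p (Icc 0 L))
    (hmpos : ∀ x ∈ Icc (0 : ℝ) L, 0 < m x)
    (hδpos : ∀ x ∈ Icc (0 : ℝ) L, 0 < δ x)
    (hppos : ∀ x ∈ Icc (0 : ℝ) L, 0 < p x)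
    (u θ q : ℝ → ℝ → ℝ)
    (hsol : IsSmoothSol L η β κ τ m δ p u θ q)
    (hbc : BCD L u θ) :
    ∀ k : ℕ, ∀ t : ℝ, 0 < t →
      HasDerivAt (energyN k L τ m p u θ q)
        (-2 * (∫ x in (0 : ℝ)..L, δ x * (pdtn k (pdt (pdx u)) x t) ^ 2)
          - β * ∫ x in (0 : ℝ)..L, (pdtn k q x t) ^ 2) t := by
  obtain ⟨hu, hθ, hq, hpde⟩ := hsol
  intro k t₀ ht₀
  have hL' : (0:ℝ) ≤ L := hL.le
  have huIcc : uIcc (0:ℝ) L = Icc 0 L := uIcc_of_le hL'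
  have hIoiNhds : Ioi (0:ℝ) ∈ 𝓝 t₀ := Ioi_mem_nhds ht₀
  -- smoothness of partial derivatives
  have hux : ContDiff ℝ (⊤ : ℕ∞) ↿(pdx u) := contDiff_pdx hu
  have hut : ContDiff ℝ (⊤ : ℕ∞) ↿(pdt u) := contDiff_pdt hu
  have huxt : ContDiff ℝ (⊤ : ℕ∞) ↿(pdt (pdx u)) := contDiff_pdt hux
  have hutt : ContDiff ℝ (⊤ : ℕ∞) ↿(pdt (pdt u)) := contDiff_pdt hut
  have hθx : ContDiff ℝ (⊤ : ℕ∞) ↿(pdx θ) := contDiff_pdx hθ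
  have hqx : ContDiff ℝ (⊤ : ℕ∞) ↿(pdx q) := contDiff_pdx hq
  set A := pdtn k (pdx u) with hA_def
  set B := pdtn k (pdt u) with hB_def
  set W := pdtn k θ with hW_def
  set R := pdtn k q with hR_def
  set C := pdtn k (pdt (pdx u)) with hC_def
  set B2 := pdtn k (pdt (pdt u)) with hB2_def
  have hA : ContDiff ℝ (⊤ : ℕ∞) ↿A := contDiff_pdtn hux k
  have hB : ContDiff ℝ (⊤ : ℕ∞) ↿B := contDiff_pdtn hut k
  have hW : ContDiff ℝ (⊤ : ℕ∞) ↿W := contDiff_pdtn hθ k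
  have hR : ContDiff ℝ (⊤ : ℕ∞) ↿R := contDiff_pdtn hq k
  have hC : ContDiff ℝ (⊤ : ℕ∞) ↿C := contDiff_pdtn huxt k
  have hB2 : ContDiff ℝ (⊤ : ℕ∞) ↿B2 := contDiff_pdtn hutt k
  -- derivative exchange identities
  have hpdtA : pdt A = C := by rw [hA_def, hC_def, pdt_pdtn]
  have hpdtB : pdt B = B2 := by rw [hB_def, hB2_def, pdt_pdtn]
  have hpdtW : pdt W = pdtn k (pdt θ) := by rw [hW_def, pdt_pdtn]
  have hpdtR : pdt R = pdtn k (pdt q) := by rw [hR_def, pdt_pdtn]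
  have hpdxB : pdx B = C := by
    rw [hB_def, hC_def, pdx_pdtn hut k, pdx_pdt_comm hu]
  have hpdxW : pdx W = pdtn k (pdx θ) := pdx_pdtn hθ k
  have hpdxR : pdx R = pdtn k (pdx q) := pdx_pdtn hq k
  have hpdxA : pdx A = pdtn k (pdx (pdx u)) := pdx_pdtn hux k
  have hpdxC : pdx C = pdtn k (pdx (pdt (pdx u))) := pdx_pdtn huxt k
  -- continuity facts
  have hmc : ContinuousOn m (Icc 0 L) := hmLip.choose_spec.continuousOn
  have hpc : ContinuousOn p (Icc 0 L) := hpLip.choose_spec.continuousOn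
  have hδc : ContinuousOn δ (Icc 0 L) := hδLip.choose_spec.continuousOn
  have cA := (contDiff_slice_x hA t₀).continuous
  have cB := (contDiff_slice_x hB t₀).continuous
  have cW := (contDiff_slice_x hW t₀).continuous
  have cR := (contDiff_slice_x hR t₀).continuous
  have cC := (contDiff_slice_x hC t₀).continuous
  have cB2 := (contDiff_slice_x hB2 t₀).continuous
  have cpdxW := (contDiff_slice_x (contDiff_pdx hW) t₀).continuous
  have cpdxR := (contDiff_slice_x (contDiff_pdx hR) t₀).continuous
  have ii : ∀ {f : ℝ → ℝ}, ContinuousOn f (Icc 0 L) → IntervalIntegrable f volume 0 L :=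
    fun h => (huIcc ▸ h).intervalIntegrable
  -- energy derivative with raw integrands
  have hder : HasDerivAt (energyN k L τ m p u θ q)
      ((1/2 : ℝ) * ((∫ x in (0:ℝ)..L, p x * (2 * A x t₀ * pdt A x t₀))
        + (∫ x in (0:ℝ)..L, m x * (2 * B x t₀ * pdt B x t₀))
        + (∫ x in (0:ℝ)..L, 2 * W x t₀ * pdt W x t₀)
        + τ * ∫ x in (0:ℝ)..L, 2 * R x t₀ * pdt R x t₀)) t₀ := by
    have box : Icc (0:ℝ) L ×ˢ Icc (t₀-1) (t₀+1) ⊆ univ := subset_univ _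
    have cpr : ∀ {f : ℝ → ℝ → ℝ}, ContDiff ℝ (⊤ : ℕ∞) ↿f →
        Continuous (fun pr : ℝ × ℝ => f pr.1 pr.2) := fun hf => hf.continuous
    have cfst : ∀ {c : ℝ → ℝ}, ContinuousOn c (Icc 0 L) →
        ContinuousOn (fun pr : ℝ × ℝ => c pr.1) (Icc (0:ℝ) L ×ˢ Icc (t₀-1) (t₀+1)) :=
      fun hc => hc.comp continuous_fst.continuousOn (fun _ hq => hq.1)
    have h1 : HasDerivAt (fun t => ∫ x in (0:ℝ)..L, p x * A x t ^ 2)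
        (∫ x in (0:ℝ)..L, p x * (2 * A x t₀ * pdt A x t₀)) t₀ := by
      refine param_deriv (H := fun x t => p x * A x t ^ 2)
        (H' := fun x t => p x * (2 * A x t * pdt A x t)) hL' ?_ ?_ ?_
      · exact (cfst hpc).mul ((cpr hA).pow 2).continuousOn
      · exact (cfst hpc).mul (((continuous_const.mul (cpr hA)).mul
          (cpr (contDiff_pdt hA)))).continuousOn
      · intro x _ t _
        exact (hasDerivAt_sq hA x t).const_mul (p x)
    have h2 : HasDerivAt (fun t => ∫ x in (0:ℝ)..L, m x * B x t ^ 2)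
        (∫ x in (0:ℝ)..L, m x * (2 * B x t₀ * pdt B x t₀)) t₀ := by
      refine param_deriv (H := fun x t => m x * B x t ^ 2)
        (H' := fun x t => m x * (2 * B x t * pdt B x t)) hL' ?_ ?_ ?_
      · exact (cfst hmc).mul ((cpr hB).pow 2).continuousOn
      · exact (cfst hmc).mul (((continuous_const.mul (cpr hB)).mul
          (cpr (contDiff_pdt hB)))).continuousOn
      · intro x _ t _
        exact (hasDerivAt_sq hB x t).const_mul (m x)
    have h3 : HasDerivAt (fun t => ∫ x in (0:ℝ)..L, W x t ^ 2)
        (∫ x in (0:ℝ)..L, 2 * W x t₀ * pdt W x t₀) t₀ := by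
      refine param_deriv (H := fun x t => W x t ^ 2)
        (H' := fun x t => 2 * W x t * pdt W x t) hL' ?_ ?_ ?_
      · exact ((cpr hW).pow 2).continuousOn
      · exact ((continuous_const.mul (cpr hW)).mul (cpr (contDiff_pdt hW))).continuousOn
      · intro x _ t _
        exact hasDerivAt_sq hW x t
    have h4 : HasDerivAt (fun t => ∫ x in (0:ℝ)..L, R x t ^ 2)
        (∫ x in (0:ℝ)..L, 2 * R x t₀ * pdt R x t₀) t₀ := by
      refine param_deriv (H := fun x t => R x t ^ 2)
        (H' := fun x t => 2 * R x t * pdt R x t) hL' ?_ ?_ ?_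
      · exact ((cpr hR).pow 2).continuousOn
      · exact ((continuous_const.mul (cpr hR)).mul (cpr (contDiff_pdt hR))).continuousOn
      · intro x _ t _
        exact hasDerivAt_sq hR x t
    exact (((h1.add h2).add h3).add (h4.const_mul τ)).const_mul (1/2 : ℝ)
  -- pointwise consequences of the PDE at time t₀
  have P2 : ∀ x ∈ Ioo (0:ℝ) L,
      pdtn k (pdt θ) x t₀ = -κ * pdx R x t₀ - η * C x t₀ := by
    intro x hx
    have hev : (pdt θ) x =ᶠ[𝓝 t₀]
        fun s => (-κ) * pdx q x s + (-η) * pdt (pdx u) x s := by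
      filter_upwards [hIoiNhds] with s hs
      have h2 := (hpde x hx s hs).2.1
      show pdt θ x s = _
      linarith
    have e1 : pdtn k (pdt θ) x t₀ =
        iteratedDeriv k (fun s => (-κ) * pdx q x s + (-η) * pdt (pdx u) x s) t₀ :=
      Filter.EventuallyEq.iteratedDeriv_eq k hev
    rw [e1, iteratedDeriv_comb (contDiff_slice_t hqx x) (contDiff_slice_t huxt x)]
    have : pdx R x t₀ = iteratedDeriv k (fun s => pdx q x s) t₀ := by rw [hpdxR]; rfl
    rw [this]
    have : C x t₀ = iteratedDeriv k (fun s => pdt (pdx u) x s) t₀ := rfl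
    rw [this]
    ring
  have P3 : ∀ x ∈ Ioo (0:ℝ) L,
      τ * pdtn k (pdt q) x t₀ = -β * R x t₀ - κ * pdx W x t₀ := by
    intro x hx
    have hev : (pdt q) x =ᶠ[𝓝 t₀]
        fun s => (-(β/τ)) * q x s + (-(κ/τ)) * pdx θ x s := by
      filter_upwards [hIoiNhds] with s hs
      have h3 := (hpde x hx s hs).2.2
      show pdt q x s = _
      field_simp
      linear_combination h3
    have e1 : pdtn k (pdt q) x t₀ =
        iteratedDeriv k (fun s => (-(β/τ)) * q x s + (-(κ/τ)) * pdx θ x s) t₀ :=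
      Filter.EventuallyEq.iteratedDeriv_eq k hev
    rw [e1, iteratedDeriv_comb (contDiff_slice_t hq x) (contDiff_slice_t hθx x)]
    have e2 : pdx W x t₀ = iteratedDeriv k (fun s => pdx θ x s) t₀ := by rw [hpdxW]; rfl
    have e3 : R x t₀ = iteratedDeriv k (fun s => q x s) t₀ := rfl
    rw [e2, e3]
    field_simp
    ring
  -- boundary values
  have hbdry : B 0 t₀ = 0 ∧ B L t₀ = 0 ∧ W 0 t₀ = 0 ∧ W L t₀ = 0 := by
    have hBz : ∀ z : ℝ, (∀ s : ℝ, 0 ≤ s → u z s = 0) → B z t₀ = 0 := by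
      intro z hz
      have hder0 : ∀ s : ℝ, 0 < s → pdt u z s = 0 := by
        intro s hs
        have hev : u z =ᶠ[𝓝 s] fun _ => (0:ℝ) := by
          filter_upwards [Ioi_mem_nhds hs] with r hr
          exact hz r (le_of_lt hr)
        show deriv (u z) s = 0
        rw [Filter.EventuallyEq.deriv_eq hev, deriv_const]
      show iteratedDeriv k ((pdt u) z) t₀ = 0
      apply iteratedDeriv_eventually_zero
      filter_upwards [hIoiNhds] with s hs
      exact hder0 s hs
    have hWz : ∀ z : ℝ, (∀ s : ℝ, 0 ≤ s → θ z s = 0) → W z t₀ = 0 := by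
      intro z hz
      show iteratedDeriv k (θ z) t₀ = 0
      apply iteratedDeriv_eventually_zero
      filter_upwards [hIoiNhds] with s hs
      exact hz s (le_of_lt hs)
    exact ⟨hBz 0 (fun s hs => (hbc s hs).1), hBz L (fun s hs => (hbc s hs).2.1),
      hWz 0 (fun s hs => (hbc s hs).2.2.1), hWz L (fun s hs => (hbc s hs).2.2.2)⟩
  obtain ⟨hB0, hBL, hW0, hWL⟩ := hbdry
  -- the two smooth integrations by parts
  have F2 : ∫ x in (0:ℝ)..L, (pdx W x t₀ * B x t₀ + W x t₀ * C x t₀) = 0 := by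
    have key := intervalIntegral.integral_eq_sub_of_hasDerivAt
      (f := fun y => W y t₀ * B y t₀)
      (f' := fun x => pdx W x t₀ * B x t₀ + W x t₀ * C x t₀)
      (a := 0) (b := L) ?_ ?_
    · rw [key, hWL, hW0]; ring
    · intro x _
      have := (hasDerivAt_pdx hW x t₀).mul (hasDerivAt_pdx hB x t₀)
      rw [hpdxB] at this
      exact this
    · exact ii ((cpdxW.continuousOn.mul cB.continuousOn).add
        (cW.continuousOn.mul cC.continuousOn))
  have F3 : ∫ x in (0:ℝ)..L, (pdx W x t₀ * R x t₀ + W x t₀ * pdx R x t₀) = 0 := by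
    have key := intervalIntegral.integral_eq_sub_of_hasDerivAt
      (f := fun y => W y t₀ * R y t₀)
      (f' := fun x => pdx W x t₀ * R x t₀ + W x t₀ * pdx R x t₀)
      (a := 0) (b := L) ?_ ?_
    · rw [key, hWL, hW0]; ring
    · intro x _
      exact (hasDerivAt_pdx hW x t₀).mul (hasDerivAt_pdx hR x t₀)
    · exact ii ((cpdxW.continuousOn.mul cR.continuousOn).add
        (cW.continuousOn.mul cpdxR.continuousOn))
  -- the Lipschitz integration by parts
  set G : ℝ → ℝ := fun x => m x * B2 x t₀ + η * pdx W x t₀ with hGdef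
  set Fk : ℝ → ℝ := fun x => p x * A x t₀ + 2 * δ x * C x t₀ with hFkdef
  set Φ : ℝ → ℝ := fun x => B x t₀ * Fk x with hΦdef
  set Ψ : ℝ → ℝ := fun x => C x t₀ * Fk x + B x t₀ * G x with hΨdef
  have hGc : ContinuousOn G (Icc 0 L) := by
    rw [hGdef]
    exact (hmc.mul cB2.continuousOn).add (continuousOn_const.mul cpdxW.continuousOn)
  have hFkc : ContinuousOn Fk (Icc 0 L) := by
    rw [hFkdef]
    exact (hpc.mul cA.continuousOn).add
      ((continuousOn_const.mul hδc).mul cC.continuousOn)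
  have hΨc : ContinuousOn Ψ (Icc 0 L) := by
    rw [hΨdef]
    exact (cC.continuousOn.mul hFkc).add (cB.continuousOn.mul hGc)
  have hΦlip : ∃ K : NNReal, LipschitzOnWith K Φ (Icc 0 L) := by
    rw [hΦdef, hFkdef]
    exact exists_lip_mul (exists_lip_of_contDiff (contDiff_slice_x hB t₀) 0 L)
      (exists_lip_add
        (exists_lip_mul hpLip (exists_lip_of_contDiff (contDiff_slice_x hA t₀) 0 L))
        (exists_lip_mul
          (exists_lip_mul ⟨0, (LipschitzWith.const (2:ℝ)).lipschitzOnWith⟩ hδLip)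
          (exists_lip_of_contDiff (contDiff_slice_x hC t₀) 0 L)))
  obtain ⟨KΦ, hKΦ⟩ := hΦlip
  obtain ⟨gΦ, hgΦ, heΦ⟩ := hKΦ.extend_real
  obtain ⟨Kp, hKp⟩ := hpLip
  obtain ⟨pe, hpe, hpeq⟩ := hKp.extend_real
  obtain ⟨Kδ, hKδ⟩ := hδLip
  obtain ⟨de, hde, hdeq⟩ := hKδ.extend_real
  have hae : ∀ᵐ x, x ∈ Ioo (0:ℝ) L → HasDerivAt gΦ (Ψ x) x := by
    filter_upwards [hpe.ae_differentiableAt_real, hde.ae_differentiableAt_real]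
      with x hpd hdd hmem
    have hIccN : Icc (0:ℝ) L ∈ 𝓝 x := Icc_mem_nhds hmem.1 hmem.2
    have hpev : p =ᶠ[𝓝 x] pe := by
      filter_upwards [hIccN] with y hy; exact hpeq hy
    have hdev : δ =ᶠ[𝓝 x] de := by
      filter_upwards [hIccN] with y hy; exact hdeq hy
    have hp' : HasDerivAt p (deriv pe x) x := hpd.hasDerivAt.congr_of_eventuallyEq hpev
    have hd' : HasDerivAt δ (deriv de x) x := hdd.hasDerivAt.congr_of_eventuallyEq hdev
    have hflux : ∀ s, 0 < s →
        deriv pe x * pdx u x s + p x * pdx (pdx u) x s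
          + (2 * deriv de x * pdt (pdx u) x s + 2 * δ x * pdx (pdt (pdx u)) x s)
        = m x * pdt (pdt u) x s + η * pdx θ x s := by
      intro s hs
      have hD : HasDerivAt (fun y => p y * pdx u y s + 2 * δ y * pdt (pdx u) y s)
          (deriv pe x * pdx u x s + p x * pdx (pdx u) x s
            + (2 * deriv de x * pdt (pdx u) x s + 2 * δ x * pdx (pdt (pdx u)) x s)) x :=
        (hp'.mul (hasDerivAt_pdx hux x s)).add
          ((hd'.const_mul 2).mul (hasDerivAt_pdx huxt x s))
      have hEq := (hpde x hmem s hs).1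
      have hpdxF : pdx (fun y s' => p y * pdx u y s' + 2 * δ y * pdt (pdx u) y s') x s
          = deriv (fun y => p y * pdx u y s + 2 * δ y * pdt (pdx u) y s) x := rfl
      rw [hpdxF, hD.deriv] at hEq
      linarith
    have hev2 : (fun s => deriv pe x * pdx u x s + p x * pdx (pdx u) x s
          + (2 * deriv de x * pdt (pdx u) x s + 2 * δ x * pdx (pdt (pdx u)) x s))
        =ᶠ[𝓝 t₀] (fun s => m x * pdt (pdt u) x s + η * pdx θ x s) := by
      filter_upwards [hIoiNhds] with s hs; exact hflux s hs
    have e1 := Filter.EventuallyEq.iteratedDeriv_eq k hev2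
    rw [iteratedDeriv_comb4 (contDiff_slice_t hux x) (contDiff_slice_t (contDiff_pdx hux) x)
        (contDiff_slice_t huxt x) (contDiff_slice_t (contDiff_pdx huxt) x)
        (deriv pe x) (p x) (2 * deriv de x) (2 * δ x) k,
      iteratedDeriv_comb (contDiff_slice_t hutt x) (contDiff_slice_t hθx x)
        (m x) η k] at e1
    have hcomb : deriv pe x * A x t₀ + p x * pdx A x t₀
        + (2 * deriv de x * C x t₀ + 2 * δ x * pdx C x t₀) = G x := by
      rw [hGdef, hpdxA, hpdxC, hpdxW]
      exact e1
    have hFk : HasDerivAt Fk (G x) x := by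
      rw [hFkdef]
      have t12 := (hp'.mul (hasDerivAt_pdx hA x t₀)).add
        ((hd'.const_mul 2).mul (hasDerivAt_pdx hC x t₀))
      rw [hcomb] at t12
      exact t12
    have hΦx : HasDerivAt Φ (Ψ x) x := by
      rw [hΦdef, hΨdef]
      have t3 := (hasDerivAt_pdx hB x t₀).mul hFk
      rw [hpdxB] at t3
      exact t3
    have hΦev : gΦ =ᶠ[𝓝 x] Φ := by
      filter_upwards [hIccN] with y hy; exact (heΦ hy).symm
    exact hΦx.congr_of_eventuallyEq hΦev
  have F1 : ∫ x in (0:ℝ)..L, Ψ x = 0 := by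
    have key := ftc_lipschitz hL' hgΦ hΨc hae
    rw [key, ← heΦ (right_mem_Icc.2 hL'), ← heΦ (left_mem_Icc.2 hL'), hΦdef]
    simp only [hB0, hBL]
    ring
  -- final value computation
  have hval : (1/2 : ℝ) * ((∫ x in (0:ℝ)..L, p x * (2 * A x t₀ * pdt A x t₀))
        + (∫ x in (0:ℝ)..L, m x * (2 * B x t₀ * pdt B x t₀))
        + (∫ x in (0:ℝ)..L, 2 * W x t₀ * pdt W x t₀)
        + τ * ∫ x in (0:ℝ)..L, 2 * R x t₀ * pdt R x t₀)
      = -2 * (∫ x in (0:ℝ)..L, δ x * C x t₀ ^ 2) - β * ∫ x in (0:ℝ)..L, R x t₀ ^ 2 := by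
    rw [hpdtA, hpdtB, hpdtW, hpdtR]
    have cPθ := (contDiff_slice_x (contDiff_pdtn (contDiff_pdt hθ) k) t₀).continuous
    have cPq := (contDiff_slice_x (contDiff_pdtn (contDiff_pdt hq) k) t₀).continuous
    have if1 : IntervalIntegrable (fun x => p x * (2 * A x t₀ * C x t₀)) volume 0 L :=
      ii (hpc.mul ((continuous_const.mul cA).mul cC).continuousOn)
    have if2 : IntervalIntegrable (fun x => m x * (2 * B x t₀ * B2 x t₀)) volume 0 L :=
      ii (hmc.mul ((continuous_const.mul cB).mul cB2).continuousOn)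
    have if3 : IntervalIntegrable (fun x => 2 * W x t₀ * pdtn k (pdt θ) x t₀) volume 0 L :=
      ii ((continuous_const.mul cW).mul cPθ).continuousOn
    have if4 : IntervalIntegrable (fun x => τ * (2 * R x t₀ * pdtn k (pdt q) x t₀)) volume 0 L :=
      ii (continuous_const.mul ((continuous_const.mul cR).mul cPq)).continuousOn
    have gΨ : IntervalIntegrable (fun x => 2 * Ψ x) volume 0 L :=
      ii (continuousOn_const.mul hΨc)
    have g2 : IntervalIntegrable
        (fun x => (-(2*η)) * (pdx W x t₀ * B x t₀ + W x t₀ * C x t₀)) volume 0 L :=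
      ii (continuousOn_const.mul
        ((cpdxW.mul cB).add (cW.mul cC)).continuousOn)
    have g3 : IntervalIntegrable
        (fun x => (-(2*κ)) * (pdx W x t₀ * R x t₀ + W x t₀ * pdx R x t₀)) volume 0 L :=
      ii (continuousOn_const.mul
        ((cpdxW.mul cR).add (cW.mul cpdxR)).continuousOn)
    have gδ : IntervalIntegrable (fun x => (-4) * (δ x * C x t₀ ^ 2)) volume 0 L :=
      ii (continuousOn_const.mul (hδc.mul (cC.pow 2).continuousOn))
    have gR : IntervalIntegrable (fun x => (-(2*β)) * (R x t₀ ^ 2)) volume 0 L :=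
      ii (continuousOn_const.mul (cR.pow 2).continuousOn)
    have g4 : IntervalIntegrable
        (fun x => (-4) * (δ x * C x t₀ ^ 2) + (-(2*β)) * (R x t₀ ^ 2)) volume 0 L := gδ.add gR
    have hcomb1 : (∫ x in (0:ℝ)..L, p x * (2 * A x t₀ * C x t₀))
        + (∫ x in (0:ℝ)..L, m x * (2 * B x t₀ * B2 x t₀))
        + (∫ x in (0:ℝ)..L, 2 * W x t₀ * pdtn k (pdt θ) x t₀)
        + τ * (∫ x in (0:ℝ)..L, 2 * R x t₀ * pdtn k (pdt q) x t₀)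
        = ∫ x in (0:ℝ)..L,
            (2 * Ψ x
              + (-(2*η)) * (pdx W x t₀ * B x t₀ + W x t₀ * C x t₀)
              + (-(2*κ)) * (pdx W x t₀ * R x t₀ + W x t₀ * pdx R x t₀)
              + ((-4) * (δ x * C x t₀ ^ 2) + (-(2*β)) * (R x t₀ ^ 2))) := by
      rw [← intervalIntegral.integral_const_mul,
        ← intervalIntegral.integral_add if1 if2,
        ← intervalIntegral.integral_add (if1.add if2) if3,
        ← intervalIntegral.integral_add ((if1.add if2).add if3) if4]
      refine intervalIntegral_congr_Ioo hL' fun x hx => ?_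
      have p2 := P2 x hx
      have p3 := P3 x hx
      simp only [hΨdef, hGdef, hFkdef]
      rw [p2]
      linear_combination (2 * R x t₀) * p3
    have hsplit : (∫ x in (0:ℝ)..L,
            (2 * Ψ x
              + (-(2*η)) * (pdx W x t₀ * B x t₀ + W x t₀ * C x t₀)
              + (-(2*κ)) * (pdx W x t₀ * R x t₀ + W x t₀ * pdx R x t₀)
              + ((-4) * (δ x * C x t₀ ^ 2) + (-(2*β)) * (R x t₀ ^ 2))))
        = 2 * (∫ x in (0:ℝ)..L, Ψ x)
          + (-(2*η)) * (∫ x in (0:ℝ)..L, (pdx W x t₀ * B x t₀ + W x t₀ * C x t₀))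
          + (-(2*κ)) * (∫ x in (0:ℝ)..L, (pdx W x t₀ * R x t₀ + W x t₀ * pdx R x t₀))
          + ((-4) * (∫ x in (0:ℝ)..L, δ x * C x t₀ ^ 2)
            + (-(2*β)) * (∫ x in (0:ℝ)..L, R x t₀ ^ 2)) := by
      rw [intervalIntegral.integral_add ((gΨ.add g2).add g3) g4,
        intervalIntegral.integral_add (gΨ.add g2) g3,
        intervalIntegral.integral_add gΨ g2,
        intervalIntegral.integral_add gδ gR,
        intervalIntegral.integral_const_mul, intervalIntegral.integral_const_mul,
        intervalIntegral.integral_const_mul, intervalIntegral.integral_const_mul,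
        intervalIntegral.integral_const_mul]
    rw [hcomb1, hsplit, F1, F2, F3]
    ring
  rw [← hval]
  exact hder
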